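/- arXiv:1107.3654 — 2 statements merged into one kernel-verified Lean document; each statement's English description precedes it below -/
import Mathlib

section
/- Let W be a finite Weyl group, W_P a parabolic subgroup, κ ∈ W^P, and w ∈ W with E(w,κ) ≠ ∅. Let s be a simple reflection with sw < w. Then: (1) if sκ > κ, then max E(w,κ) = max E(sw,κ); (2) if sκ ≤ κ, then max E(w,κ) = s * max E(sw,sκ), where * is the Demazure product. -/
/-!
Common framework for statements about the Bruhat order and the Demazure product on a
finite Weyl group, modelled as a finite (crystallographic) Coxeter system.
-/

noncomputable section

namespace DesingSMT

variable {B W : Type*} [Group W] {M : CoxeterMatrix B}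

/-- A Coxeter matrix is crystallographic; a finite group with a crystallographic
Coxeter system is a finite Weyl group. -/
def IsCrystallographic (M : CoxeterMatrix B) : Prop :=
  ∀ i j : B, i ≠ j → M i j ∈ ({2, 3, 4, 6} : Set ℕ)

/-- The Bruhat order on a Coxeter group, via the subword property: `u ≤ w` iff some
reduced word for `w` admits a subword whose product is `u`. -/
def cBruhatLE (cs : CoxeterSystem M W) (u w : W) : Prop :=
  ∃ ω : List B, cs.IsReduced ω ∧ cs.wordProd ω = w ∧
    ∃ ω' : List B, ω'.Sublist ω ∧ cs.wordProd ω' = u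

/-- The set `D(x,y) = {uv ∣ u ≤ x, v ≤ y}`. -/
def demazureSet (cs : CoxeterSystem M W) (x y : W) : Set W :=
  {z | ∃ u v : W, cBruhatLE cs u x ∧ cBruhatLE cs v y ∧ z = u * v}

/-- `d` is the Demazure product `x * y`, i.e. the (unique) Bruhat-greatest element of
the set `D(x,y)`. -/
def isDemazureProd (cs : CoxeterSystem M W) (x y d : W) : Prop :=
  d ∈ demazureSet cs x y ∧ ∀ z ∈ demazureSet cs x y, cBruhatLE cs z d

/-- The word product `w(𝐢(K)) = s_{i_{k_1}} ⋯ s_{i_{k_p}}` over the positions of `K`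
in increasing order. -/
def selProd (cs : CoxeterSystem M W) {r : ℕ} (ival : Fin r → B) (K : Finset (Fin r)) : W :=
  cs.wordProd ((K.sort (· ≤ ·)).map ival)

/-- `w = w_max(𝐢(J))`: `w` is the (unique) Bruhat-greatest element of
`{w(𝐢(K)) ∣ K ⊆ J}`. -/
def isWMaxOf (cs : CoxeterSystem M W) {r : ℕ} (ival : Fin r → B) (J : Finset (Fin r))
    (w : W) : Prop :=
  (∃ K ⊆ J, selProd cs ival K = w) ∧
    ∀ v : W, (∃ K ⊆ J, selProd cs ival K = v) → cBruhatLE cs v w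

/-- The (standard) parabolic subgroup `W_P` generated by the simple reflections
indexed by `I`. -/
def parab (cs : CoxeterSystem M W) (I : Set B) : Subgroup W :=
  Subgroup.closure (cs.simple '' I)

/-- `κ ∈ W^P`: `κ` is a minimal length representative of its coset `κ W_P`. -/
def isMinRep (cs : CoxeterSystem M W) (I : Set B) (κ : W) : Prop :=
  ∀ z ∈ parab cs I, cs.length κ ≤ cs.length (κ * z)

/-- The set `E(w,κ) = {v ∈ W ∣ v ≤ w, v ≡ κ mod W_P}`. -/
def cosetE (cs : CoxeterSystem M W) (I : Set B) (w κ : W) : Set W :=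
  {v | cBruhatLE cs v w ∧ v⁻¹ * κ ∈ parab cs I}

/-- `u = max E(w,κ)`: `u` is the (unique) Bruhat-greatest element of `E(w,κ)`. -/
def isMaxE (cs : CoxeterSystem M W) (I : Set B) (w κ u : W) : Prop :=
  u ∈ cosetE cs I w κ ∧ ∀ v ∈ cosetE cs I w κ, cBruhatLE cs v u

end DesingSMT

/-!
Everything rests on the strong exchange condition. The parity `η(w, t)` of the number of
occurrences of a reflection `t` in the left inversion sequence of a word for `w` depends only on
`w`: it is read off from the action `s_i • (t, ε) = (s_i t s_i, ε + [t = s_i])` of `W` on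
`W × ZMod 2`, which exists because these permutations satisfy the Coxeter relations. The cocycle
identity for `η` gives `η(w, t) = 1` whenever `ℓ(t w) < ℓ w`, so `t` occurs in the inversion
sequence of every word for `w`, and deleting that letter exhibits `t w` as a subword. Hence the
subword order coincides with the order generated by the steps `t w < w`, whatever reduced word is
used; this gives transitivity and the lifting property `u ≤ w → u ≤ s w ∨ s u ≤ s w`.

Minimal coset representatives satisfy `ℓ(κ z) = ℓ κ + ℓ z` for `z ∈ W_P`. So either `κ₂ = s κ`,
and `s` changes the length of every element of `κ W_P` by `ℓ κ₂ - ℓ κ`, or `ℓ κ₂ = ℓ κ`. In case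
(1) `s` raises `u`, so `u ≤ s w` by lifting and `u` is also the maximum of `E(s w, κ)`. In case
(2) `s` lowers `u` (by the length count if `κ₂ = s κ`, by the maximality of `u` if `κ₂ = κ`), so
`s u ∈ E(s w, κ₂)` and `u ∈ D(s, u')`, whose maximum is `u'` or `s u'`; both lie below `u`.
-/

namespace CoxeterSystem

open List

variable {B W : Type*} [Group W] {M : CoxeterMatrix B} (cs : CoxeterSystem M W)

local prefix:100 "s " => cs.simple
local prefix:100 "π " => cs.wordProd
local prefix:100 "ℓ " => cs.length
local prefix:100 "lis " => cs.leftInvSeq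

theorem simple_mul_mul_simple_eq_simple_iff (i : B) (t : W) : s i * t * s i = s i ↔ t = s i := by
  constructor
  · intro h
    simpa [mul_assoc] using congrArg (fun x ↦ s i * x * s i) h
  · rintro rfl
    simp

theorem prod_map_alternatingWord {G : Type*} [Monoid G] (f : B → G) (i j : B) (m : ℕ) :
    ((alternatingWord i j (2 * m)).map f).prod = (f i * f j) ^ m := by
  induction m with
  | zero => simp [alternatingWord]
  | succ m ih =>
    rw [mul_add, mul_one, alternatingWord_succ, alternatingWord_succ]
    simp [ih, pow_succ]

section ReflectionCocycle

variable [DecidableEq W]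

def reflectionPerm (i : B) : Equiv.Perm (W × ZMod 2) :=
  Function.Involutive.toPerm (fun p ↦ (s i * p.1 * s i, p.2 + if p.1 = s i then 1 else 0)) <| by
    rintro ⟨t, ε⟩
    have hconj : s i * (s i * t * s i) * s i = t := by simp [mul_assoc]
    simp only [hconj, simple_mul_mul_simple_eq_simple_iff, add_assoc, CharTwo.add_self_eq_zero,
      add_zero]

theorem reflectionPerm_apply (i : B) (t : W) (ε : ZMod 2) :
    cs.reflectionPerm i (t, ε) = (s i * t * s i, ε + if t = s i then 1 else 0) := rfl

theorem inv_reflectionPerm (i : B) : (cs.reflectionPerm i)⁻¹ = cs.reflectionPerm i :=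
  Function.Involutive.toPerm_symm _

theorem inv_prod_map_reflectionPerm_apply (ω : List B) (t : W) (ε : ZMod 2) :
    ((ω.map cs.reflectionPerm).prod)⁻¹ (t, ε) = ((π ω)⁻¹ * t * π ω, ε + (lis ω).count t) := by
  induction ω generalizing t ε with
  | nil => simp
  | cons i ω ih =>
    rw [map_cons, prod_cons, mul_inv_rev, inv_reflectionPerm, Equiv.Perm.mul_apply,
      reflectionPerm_apply, ih]
    have hcount : ((lis ω).map (MulAut.conj (s i))).count t = (lis ω).count (s i * t * s i) := by
      conv_lhs => rw [show t = MulAut.conj (s i) (s i * t * s i) by simp [mul_assoc]]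
      exact count_map_of_injective _ _ (MulAut.conj (s i)).injective _
    simp only [leftInvSeq, count_cons, hcount, wordProd_cons, mul_inv_rev, inv_simple, beq_iff_eq,
      eq_comm (a := s i), Nat.cast_add, Nat.cast_ite, Nat.cast_one, Nat.cast_zero]
    exact Prod.ext (by group) (by dsimp only; abel)

theorem even_count_leftInvSeq_alternatingWord (i j : B) (t : W) :
    Even ((lis (alternatingWord i j (2 * M i j))).count t) := by
  set f : ℕ → W := fun k ↦ π (alternatingWord j i (2 * k + 1))
  have hf : ∀ k, f (M i j + k) = f k := by
    intro k
    simp only [f, prod_alternatingWord_eq_mul_pow, Nat.not_even_two_mul_add_one, if_false,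
      show ∀ n, (2 * n + 1) / 2 = n by omega, pow_add, cs.simple_mul_simple_pow' i j, one_mul]
  have hlis : lis (alternatingWord i j (2 * M i j)) = (range (2 * M i j)).map f :=
    ext_getElem (by simp) fun k hk _ ↦ by
      simp [f, getElem_leftInvSeq_alternatingWord cs i j _ k (by simpa using hk)]
  rw [hlis, two_mul, range_add, map_append, map_map, count_append]
  simp only [Function.comp_def, hf]
  exact ⟨_, rfl⟩

theorem isLiftable_reflectionPerm : M.IsLiftable cs.reflectionPerm := by
  intro i j
  rw [← prod_map_alternatingWord, ← inv_eq_one, Equiv.Perm.ext_iff]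
  rintro ⟨t, ε⟩
  have hπ : π (alternatingWord i j (2 * M i j)) = 1 := by
    rw [wordProd, prod_map_alternatingWord, simple_mul_simple_pow]
  rw [inv_prod_map_reflectionPerm_apply, hπ,
    ZMod.natCast_eq_zero_iff_even.mpr (cs.even_count_leftInvSeq_alternatingWord i j t)]
  simp

def reflectionRep : W →* Equiv.Perm (W × ZMod 2) := cs.lift ⟨_, cs.isLiftable_reflectionPerm⟩

theorem reflectionRep_wordProd (ω : List B) :
    cs.reflectionRep (π ω) = (ω.map cs.reflectionPerm).prod := by
  rw [wordProd, map_list_prod, map_map]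
  congr 2
  funext i
  exact cs.lift_apply_simple cs.isLiftable_reflectionPerm i

def reflectionCocycle (w t : W) : ZMod 2 := (cs.reflectionRep w⁻¹ (t, 0)).2

theorem reflectionRep_inv_wordProd_apply (ω : List B) (t : W) (ε : ZMod 2) :
    cs.reflectionRep (π ω)⁻¹ (t, ε) = ((π ω)⁻¹ * t * π ω, ε + (lis ω).count t) := by
  rw [map_inv, reflectionRep_wordProd, inv_prod_map_reflectionPerm_apply]

theorem reflectionCocycle_wordProd (ω : List B) (t : W) :
    cs.reflectionCocycle (π ω) t = (lis ω).count t := by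
  rw [reflectionCocycle, reflectionRep_inv_wordProd_apply, zero_add]

theorem reflectionRep_inv_apply (w t : W) (ε : ZMod 2) :
    cs.reflectionRep w⁻¹ (t, ε) = (w⁻¹ * t * w, ε + cs.reflectionCocycle w t) := by
  obtain ⟨ω, rfl⟩ := cs.wordProd_surjective w
  rw [reflectionRep_inv_wordProd_apply, reflectionCocycle_wordProd]

theorem reflectionCocycle_mul (x y t : W) :
    cs.reflectionCocycle (x * y) t =
      cs.reflectionCocycle x t + cs.reflectionCocycle y (x⁻¹ * t * x) := by
  have h := congrArg Prod.snd (cs.reflectionRep_inv_apply (x * y) t 0)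
  rw [mul_inv_rev, map_mul, Equiv.Perm.mul_apply, reflectionRep_inv_apply,
    reflectionRep_inv_apply] at h
  simpa using h.symm

theorem reflectionCocycle_one (t : W) : cs.reflectionCocycle 1 t = 0 := by
  simpa using cs.reflectionCocycle_wordProd [] t

theorem reflectionCocycle_simple (i : B) (t : W) :
    cs.reflectionCocycle (s i) t = if t = s i then 1 else 0 := by
  rw [← wordProd_singleton, reflectionCocycle_wordProd, leftInvSeq_singleton, count_singleton,
    wordProd_singleton]
  rcases eq_or_ne t (s i) with rfl | h
  · simp
  · simp [h, h.symm]

theorem reflectionCocycle_inv (x t : W) :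
    cs.reflectionCocycle x⁻¹ (x⁻¹ * t * x) = cs.reflectionCocycle x t := by
  have h := cs.reflectionCocycle_mul x x⁻¹ t
  rw [mul_inv_cancel, reflectionCocycle_one] at h
  exact (CharTwo.add_eq_zero.mp h.symm).symm

theorem IsReflection.reflectionCocycle_self {t : W} (ht : cs.IsReflection t) :
    cs.reflectionCocycle t t = 1 := by
  obtain ⟨v, i, rfl⟩ := ht
  set t := v * s i * v⁻¹
  have hconj : v⁻¹ * t * v = s i := by simp [t, mul_assoc]
  calc cs.reflectionCocycle t t
      = cs.reflectionCocycle (v * (s i * v⁻¹)) t := by rw [← mul_assoc]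
    _ = cs.reflectionCocycle v t + (1 + cs.reflectionCocycle v⁻¹ (s i)) := by
        rw [reflectionCocycle_mul, hconj, reflectionCocycle_mul, reflectionCocycle_simple,
          if_pos rfl, inv_simple, simple_mul_simple_self, one_mul]
    _ = 1 := by
        rw [← hconj, reflectionCocycle_inv, add_left_comm, CharTwo.add_self_eq_zero, add_zero]

theorem reflectionCocycle_eq_one_iff {w t : W} :
    cs.reflectionCocycle w t = 1 ↔ cs.IsLeftInversion w t := by
  have of_eq_one : ∀ w, cs.reflectionCocycle w t = 1 → cs.IsLeftInversion w t := by
    intro w h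
    obtain ⟨ω, hω, rfl⟩ := cs.exists_isReduced w
    refine cs.isLeftInversion_of_mem_leftInvSeq hω (count_pos_iff.mp (Nat.pos_of_ne_zero ?_))
    intro h0
    rw [reflectionCocycle_wordProd, h0, Nat.cast_zero] at h
    exact zero_ne_one h
  refine ⟨of_eq_one w, fun ⟨ht, hlt⟩ ↦ ?_⟩
  have h0 : cs.reflectionCocycle (t * w) t = 0 := by
    by_contra hne
    have hinv := (of_eq_one _ ((show ∀ x : ZMod 2, x ≠ 0 → x = 1 by decide) _ hne)).2
    rw [← mul_assoc, ht.mul_self, one_mul] at hinv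
    omega
  calc cs.reflectionCocycle w t
      = cs.reflectionCocycle (t * (t * w)) t := by rw [← mul_assoc, ht.mul_self, one_mul]
    _ = 1 := by
        rw [reflectionCocycle_mul, show t⁻¹ * t * t = t by group, ht.reflectionCocycle_self,
          h0, add_zero]

theorem IsLeftInversion.mem_leftInvSeq {ω : List B} {t : W} (h : cs.IsLeftInversion (π ω) t) :
    t ∈ lis ω := by
  have hodd := cs.reflectionCocycle_eq_one_iff.mpr h
  rw [reflectionCocycle_wordProd] at hodd
  refine count_pos_iff.mp (Nat.pos_of_ne_zero fun h0 ↦ ?_)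
  rw [h0, Nat.cast_zero] at hodd
  exact zero_ne_one hodd

end ReflectionCocycle

theorem IsLeftInversion.exists_sublist_wordProd_eq {ω : List B} {t : W}
    (h : cs.IsLeftInversion (π ω) t) :
    ∃ ω', ω' <+ ω ∧ ω'.length + 1 = ω.length ∧ π ω' = t * π ω := by
  classical
  obtain ⟨j, hj, hget⟩ := mem_iff_getElem.mp h.mem_leftInvSeq
  refine ⟨ω.eraseIdx j, eraseIdx_sublist _ _, length_eraseIdx_add_one (by simpa using hj), ?_⟩
  rw [← getD_leftInvSeq_mul_wordProd, getD_eq_getElem _ _ hj, hget]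

theorem exists_isReduced_sublist (ω : List B) :
    ∃ ω', ω' <+ ω ∧ cs.IsReduced ω' ∧ π ω' = π ω := by
  induction ω with
  | nil => exact ⟨[], Sublist.refl _, by simp [IsReduced], rfl⟩
  | cons i ω ih =>
    obtain ⟨ρ, hsub, hred, hprod⟩ := ih
    rcases cs.length_simple_mul (π ρ) i with hlen | hlen
    · refine ⟨i :: ρ, hsub.cons_cons i, ?_, by rw [wordProd_cons, wordProd_cons, hprod]⟩
      rw [IsReduced, wordProd_cons, hlen, hred, length_cons]
    · obtain ⟨ρ', hsub', hlen', hprod'⟩ :=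
        IsLeftInversion.exists_sublist_wordProd_eq cs (ω := ρ) ⟨cs.isReflection_simple i, by omega⟩
      refine ⟨ρ', (hsub'.trans hsub).cons i, ?_, by rw [hprod', hprod, wordProd_cons]⟩
      rw [IsReduced, hprod']
      rw [IsReduced] at hred
      omega

end CoxeterSystem

namespace DesingSMT

open CoxeterSystem List

variable {B W : Type*} [Group W] {M : CoxeterMatrix B} (cs : CoxeterSystem M W)

local prefix:100 "s " => cs.simple
local prefix:100 "π " => cs.wordProd
local prefix:100 "ℓ " => cs.length

def subwordProds (ω : List B) : Set W := {u | ∃ ω', ω' <+ ω ∧ π ω' = u}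

def chainLE : W → W → Prop :=
  Relation.ReflTransGen fun u w ↦ ∃ t, cs.IsLeftInversion w t ∧ u = t * w

variable {cs}

theorem wordProd_mem_subwordProds (ω : List B) : π ω ∈ subwordProds cs ω :=
  ⟨ω, Sublist.refl ω, rfl⟩

theorem simple_mul_mem_subwordProds_cons {i : B} {ω : List B} {u : W}
    (hu : u ∈ subwordProds cs (i :: ω)) : s i * u ∈ subwordProds cs (i :: ω) := by
  obtain ⟨ω', hsub, rfl⟩ := hu
  cases hsub with
  | cons _ hsub => exact ⟨i :: ω', hsub.cons_cons i, wordProd_cons cs i ω'⟩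
  | cons_cons _ hsub => exact ⟨_, hsub.cons i, by rw [wordProd_cons, simple_mul_simple_cancel_left]⟩

theorem mul_mem_subwordProds {ω : List B} {u t : W} (hu : u ∈ subwordProds cs ω)
    (ht : cs.IsLeftInversion u t) : t * u ∈ subwordProds cs ω := by
  obtain ⟨ω', hsub, rfl⟩ := hu
  obtain ⟨ω'', hsub', -, hprod⟩ := ht.exists_sublist_wordProd_eq
  exact ⟨ω'', hsub'.trans hsub, hprod⟩

theorem chainLE.mem_subwordProds {ω : List B} {u w : W} (h : chainLE cs u w)
    (hw : w ∈ subwordProds cs ω) : u ∈ subwordProds cs ω := by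
  induction h using Relation.ReflTransGen.head_induction_on with
  | refl => exact hw
  | head hstep _ ih =>
    obtain ⟨t, ht, rfl⟩ := hstep
    exact mul_mem_subwordProds ih ht

theorem chainLE.length_le {u w : W} (h : chainLE cs u w) : ℓ u ≤ ℓ w := by
  induction h with
  | refl => rfl
  | tail _ hstep ih =>
    obtain ⟨t, ht, rfl⟩ := hstep
    exact ih.trans ht.2.le

theorem chainLE_of_isLeftInversion {w t : W} (ht : cs.IsLeftInversion w t) :
    chainLE cs (t * w) w :=
  Relation.ReflTransGen.single ⟨t, ht, rfl⟩

theorem chainLE_simple_mul_self {w : W} {i : B} (h : ℓ (s i * w) < ℓ w) :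
    chainLE cs (s i * w) w :=
  chainLE_of_isLeftInversion ⟨cs.isReflection_simple i, h⟩

theorem chainLE_simple_mul {w : W} {i : B} (h : ℓ w < ℓ (s i * w)) :
    chainLE cs w (s i * w) := by
  simpa using chainLE_simple_mul_self (cs := cs) (w := s i * w) (i := i) (by simpa using h)

theorem chainLE.trans {u v w : W} (h₁ : chainLE cs u v) (h₂ : chainLE cs v w) :
    chainLE cs u w :=
  Relation.ReflTransGen.trans h₁ h₂

variable (cs) in
def SubwordsChainBelow (n : ℕ) : Prop :=
  ∀ ω : List B, cs.IsReduced ω → ω.length ≤ n → ∀ u ∈ subwordProds cs ω, chainLE cs u (π ω)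

theorem chainLE.simple_mul_simple_mul {n : ℕ} (hn : SubwordsChainBelow cs n) {x y : W} {i : B}
    (h : chainLE cs x y) (hy : ℓ y ≤ n) (hasc : ℓ y < ℓ (s i * y)) :
    chainLE cs (s i * x) (s i * y) := by
  have hy' : chainLE cs y (s i * y) := chainLE_simple_mul hasc
  induction h using Relation.ReflTransGen.head_induction_on with
  | refl => exact Relation.ReflTransGen.refl
  | @head x z hstep hzy ih =>
    replace hzy : chainLE cs z y := hzy
    obtain ⟨t, ht, rfl⟩ := hstep
    rcases cs.length_simple_mul z i with hz | hz
    · rcases cs.length_simple_mul (t * z) i with hx | hx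
      · refine Relation.ReflTransGen.head ⟨s i * t * (s i)⁻¹, ⟨ht.1.conj _, ?_⟩, ?_⟩ ih
        · simp only [inv_simple, mul_assoc, simple_mul_simple_cancel_left]
          have := ht.2
          omega
        · simp [mul_assoc]
      · exact (chainLE_simple_mul_self (by omega)).trans
          ((chainLE_of_isLeftInversion ht).trans (hzy.trans hy'))
    · obtain ⟨τ, hτ, hτz⟩ := cs.exists_isReduced (s i * z)
      obtain rfl : z = π (i :: τ) := by
        rw [wordProd_cons, ← hτz, simple_mul_simple_cancel_left]
      have hred : cs.IsReduced (i :: τ) := by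
        rw [CoxeterSystem.IsReduced, length_cons, ← hτ.eq, ← hτz]
        omega
      have hmem : s i * (t * π (i :: τ)) ∈ subwordProds cs (i :: τ) :=
        simple_mul_mem_subwordProds_cons
          ((chainLE_of_isLeftInversion ht).mem_subwordProds (wordProd_mem_subwordProds _))
      have hlen : (i :: τ).length ≤ n := hred.eq ▸ hzy.length_le.trans hy
      exact (hn _ hred hlen _ hmem).trans (hzy.trans hy')

theorem subwordsChainBelow (n : ℕ) : SubwordsChainBelow cs n := by
  induction n with
  | zero =>
    rintro ω - hlen u ⟨ω', hsub, rfl⟩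
    obtain rfl := length_eq_zero_iff.mp (Nat.le_zero.mp hlen)
    obtain rfl := sublist_nil.mp hsub
    exact Relation.ReflTransGen.refl
  | succ n ih =>
    rintro (_ | ⟨i, τ⟩) hω hlen u ⟨ω', hsub, rfl⟩
    · rw [sublist_nil.mp hsub]
      exact Relation.ReflTransGen.refl
    have hτ : cs.IsReduced τ := by simpa using hω.drop 1
    have hτn : τ.length ≤ n := by simpa using hlen
    have hasc : ℓ (π τ) < ℓ (s i * π τ) := by
      rw [← wordProd_cons, hω.eq, hτ.eq, length_cons]
      omega
    rw [wordProd_cons]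
    cases hsub with
    | cons _ hsub => exact (ih τ hτ hτn _ ⟨ω', hsub, rfl⟩).trans (chainLE_simple_mul hasc)
    | @cons_cons ρ _ _ hsub =>
      rw [wordProd_cons]
      exact (ih τ hτ hτn _ ⟨ρ, hsub, rfl⟩).simple_mul_simple_mul ih (hτ.eq ▸ hτn) hasc

theorem cBruhatLE_iff_chainLE {u w : W} : cBruhatLE cs u w ↔ chainLE cs u w := by
  constructor
  · rintro ⟨ω, hω, rfl, ω', hsub, rfl⟩
    exact subwordsChainBelow _ ω hω le_rfl _ ⟨ω', hsub, rfl⟩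
  · intro h
    obtain ⟨ω, hω, rfl⟩ := cs.exists_isReduced w
    obtain ⟨ω', hsub, rfl⟩ := h.mem_subwordProds (wordProd_mem_subwordProds ω)
    exact ⟨ω, hω, rfl, ω', hsub, rfl⟩

theorem cBruhatLE.mem_subwordProds {u : W} {ω : List B} (h : cBruhatLE cs u (π ω)) :
    u ∈ subwordProds cs ω :=
  (cBruhatLE_iff_chainLE.mp h).mem_subwordProds (wordProd_mem_subwordProds ω)

theorem cBruhatLE_refl (w : W) : cBruhatLE cs w w :=
  cBruhatLE_iff_chainLE.mpr Relation.ReflTransGen.refl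

theorem cBruhatLE_one (w : W) : cBruhatLE cs 1 w := by
  obtain ⟨ω, hω, rfl⟩ := cs.exists_isReduced w
  exact ⟨ω, hω, rfl, [], nil_sublist ω, wordProd_nil cs⟩

theorem cBruhatLE.trans {u v w : W} (h₁ : cBruhatLE cs u v) (h₂ : cBruhatLE cs v w) :
    cBruhatLE cs u w :=
  cBruhatLE_iff_chainLE.mpr ((cBruhatLE_iff_chainLE.mp h₁).trans (cBruhatLE_iff_chainLE.mp h₂))

theorem cBruhatLE.length_le {u w : W} (h : cBruhatLE cs u w) : ℓ u ≤ ℓ w :=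
  (cBruhatLE_iff_chainLE.mp h).length_le

theorem cBruhatLE.eq_of_length_le {u w : W} (h : cBruhatLE cs u w) (hlen : ℓ w ≤ ℓ u) :
    u = w := by
  obtain ⟨ω, hω, rfl, ω', hsub, rfl⟩ := h
  rw [hω.eq] at hlen
  rw [hsub.eq_of_length_le (hlen.trans (cs.length_wordProd_le ω'))]

theorem cBruhatLE.antisymm {u w : W} (h₁ : cBruhatLE cs u w) (h₂ : cBruhatLE cs w u) : u = w :=
  h₁.eq_of_length_le h₂.length_le

theorem cBruhatLE_simple_mul_self {w : W} {i : B} (h : ℓ (s i * w) < ℓ w) :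
    cBruhatLE cs (s i * w) w :=
  cBruhatLE_iff_chainLE.mpr (chainLE_simple_mul_self h)

theorem cBruhatLE.eq_one_or_eq_simple {u : W} {i : B} (h : cBruhatLE cs u (s i)) :
    u = 1 ∨ u = s i := by
  have hlen := h.length_le
  rw [length_simple] at hlen
  rcases Nat.le_one_iff_eq_zero_or_eq_one.mp hlen with h0 | h1
  · exact Or.inl (cs.length_eq_zero_iff.mp h0)
  · exact Or.inr (h.eq_of_length_le (by rw [h1, length_simple]))

theorem cBruhatLE.simple_mul_simple_mul {u w : W} {i : B} (h : cBruhatLE cs u w)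
    (hw : ℓ w < ℓ (s i * w)) : cBruhatLE cs u (s i * w) ∧ cBruhatLE cs (s i * u) (s i * w) := by
  obtain ⟨ω, hω, rfl, ω', hsub, rfl⟩ := h
  have hred : cs.IsReduced (i :: ω) := by
    rw [CoxeterSystem.IsReduced, wordProd_cons, length_cons, ← hω.eq]
    rcases cs.length_simple_mul (π ω) i with h | h
    · exact h
    · exact absurd hw (by omega)
  exact ⟨⟨i :: ω, hred, wordProd_cons cs i ω, ω', hsub.cons i, rfl⟩,
    ⟨i :: ω, hred, wordProd_cons cs i ω, i :: ω', hsub.cons_cons i, wordProd_cons cs i ω'⟩⟩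

theorem cBruhatLE.le_or_simple_mul_le {u w : W} (h : cBruhatLE cs u w) (i : B) :
    cBruhatLE cs u (s i * w) ∨ cBruhatLE cs (s i * u) (s i * w) := by
  obtain ⟨τ, hτ, hτw⟩ := cs.exists_isReduced (s i * w)
  have hw' : w = π (i :: τ) := by rw [wordProd_cons, ← hτw, simple_mul_simple_cancel_left]
  rw [hw'] at h
  obtain ⟨ω', hsub, rfl⟩ := h.mem_subwordProds
  rw [hτw]
  cases hsub with
  | cons _ hsub => exact Or.inl ⟨τ, hτ, rfl, ω', hsub, rfl⟩
  | @cons_cons ρ _ _ hsub =>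
    exact Or.inr ⟨τ, hτ, rfl, ρ, hsub, by rw [wordProd_cons, simple_mul_simple_cancel_left]⟩

theorem cBruhatLE.simple_mul_le {u w : W} {i : B} (h : cBruhatLE cs u w)
    (hw : ℓ (s i * w) < ℓ w) : cBruhatLE cs (s i * u) w := by
  have hasc : ℓ (s i * w) < ℓ (s i * (s i * w)) := by rwa [simple_mul_simple_cancel_left]
  rcases h.le_or_simple_mul_le i with h' | h'
  · simpa using (h'.simple_mul_simple_mul hasc).2
  · exact h'.trans (cBruhatLE_simple_mul_self hw)

theorem cBruhatLE.simple_mul_le_simple_mul {u w : W} {i : B} (h : cBruhatLE cs u w)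
    (hu : ℓ (s i * u) < ℓ u) : cBruhatLE cs (s i * u) (s i * w) :=
  (h.le_or_simple_mul_le i).elim (cBruhatLE_simple_mul_self hu).trans id

theorem cBruhatLE.le_simple_mul {u w : W} {i : B} (h : cBruhatLE cs u w)
    (hu : ℓ u < ℓ (s i * u)) : cBruhatLE cs u (s i * w) := by
  refine (h.le_or_simple_mul_le i).elim id fun h' ↦ ?_
  have hsu := cBruhatLE_simple_mul_self (cs := cs) (w := s i * u) (i := i) (by simpa using hu)
  rw [simple_mul_simple_cancel_left] at hsu
  exact hsu.trans h'

theorem wordProd_mem_parab {I : Set B} {ω : List B} (hω : ∀ c ∈ ω, c ∈ I) :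
    π ω ∈ parab cs I := by
  induction ω with
  | nil => exact one_mem _
  | cons c ω ih =>
    rw [wordProd_cons]
    exact mul_mem (Subgroup.subset_closure ⟨c, hω c mem_cons_self, rfl⟩)
      (ih fun c' hc' ↦ hω c' (mem_cons_of_mem c hc'))

theorem exists_isReduced_of_mem_parab {I : Set B} {z : W} (hz : z ∈ parab cs I) :
    ∃ ω : List B, cs.IsReduced ω ∧ (∀ c ∈ ω, c ∈ I) ∧ π ω = z := by
  obtain ⟨ω, hI, rfl⟩ : ∃ ω : List B, (∀ c ∈ ω, c ∈ I) ∧ π ω = z := by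
    induction hz using Subgroup.closure_induction with
    | mem x hx =>
      obtain ⟨c, hc, rfl⟩ := hx
      exact ⟨[c], by simpa using hc, wordProd_singleton cs c⟩
    | one => exact ⟨[], by simp, wordProd_nil cs⟩
    | mul x y _ _ ihx ihy =>
      obtain ⟨ω₁, h₁, rfl⟩ := ihx
      obtain ⟨ω₂, h₂, rfl⟩ := ihy
      exact ⟨ω₁ ++ ω₂, fun c hc ↦ (mem_append.mp hc).elim (h₁ c) (h₂ c), wordProd_append cs _ _⟩
    | inv x _ ih =>
      obtain ⟨ω, h, rfl⟩ := ih
      exact ⟨ω.reverse, fun c hc ↦ h c (mem_reverse.mp hc), wordProd_reverse cs ω⟩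
  obtain ⟨ρ, hsub, hρ, hprod⟩ := cs.exists_isReduced_sublist ω
  exact ⟨ρ, hρ, fun c hc ↦ hI c (hsub.subset hc), hprod⟩

theorem isMinRep.length_mul {I : Set B} {κ z : W} (hκ : isMinRep cs I κ) (hz : z ∈ parab cs I) :
    ℓ (κ * z) = ℓ κ + ℓ z := by
  obtain ⟨α, hα, rfl⟩ := cs.exists_isReduced κ
  obtain ⟨β, hβ, hI, rfl⟩ := exists_isReduced_of_mem_parab hz
  obtain ⟨ρ, hsub, hρ, hprod⟩ := cs.exists_isReduced_sublist (α ++ β)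
  obtain ⟨α', β', rfl, hα', hβ'⟩ := sublist_append_iff.mp hsub
  rw [wordProd_append, wordProd_append] at hprod
  have hβ'P : π β' ∈ parab cs I := wordProd_mem_parab fun c hc ↦ hI c (hβ'.subset hc)
  -- if the reduced subword `α' ++ β'` of `α ++ β` had `α'` shorter than `α`, then `π α'` would be
  -- an element of `κ W_P` shorter than `κ`
  have hlen : α.length ≤ α'.length := by
    have hmin := hκ _ (mul_mem (wordProd_mem_parab hI) (inv_mem hβ'P))
    rw [← mul_assoc, ← hprod, mul_inv_cancel_right, hα.eq] at hmin
    exact hmin.trans (cs.length_wordProd_le α')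
  obtain rfl := hα'.eq_of_length_le hlen
  have hββ' : π β' = π β := mul_left_cancel hprod
  have hβlen := cs.length_wordProd_le β'
  rw [hββ', hβ.eq] at hβlen
  rw [← hprod, ← wordProd_append, hρ.eq, length_append, hα.eq, hβ.eq]
  have := hβ'.length_le
  omega

theorem isDemazureProd.eq_of_mem {x y d e : W} (hd : isDemazureProd cs x y d)
    (he : e ∈ demazureSet cs x y) (hub : ∀ z ∈ demazureSet cs x y, cBruhatLE cs z e) : d = e :=
  (hub d hd.1).antisymm (hd.2 e he)

theorem isDemazureProd_simple_of_lt {v d : W} {i : B} (hv : ℓ v < ℓ (s i * v))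
    (hd : isDemazureProd cs (s i) v d) : d = s i * v := by
  refine hd.eq_of_mem ⟨s i, v, cBruhatLE_refl _, cBruhatLE_refl _, rfl⟩ ?_
  rintro _ ⟨x, y, hx, hy, rfl⟩
  have hyv := hy.simple_mul_simple_mul hv
  rcases hx.eq_one_or_eq_simple with rfl | rfl
  · simpa using hyv.1
  · exact hyv.2

theorem isDemazureProd_simple_of_gt {v d : W} {i : B} (hv : ℓ (s i * v) < ℓ v)
    (hd : isDemazureProd cs (s i) v d) : d = v := by
  refine hd.eq_of_mem ⟨1, v, cBruhatLE_one _, cBruhatLE_refl _, (one_mul v).symm⟩ ?_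
  rintro _ ⟨x, y, hx, hy, rfl⟩
  rcases hx.eq_one_or_eq_simple with rfl | rfl
  · simpa using hy
  · exact hy.simple_mul_le hv

variable {I : Set B}

theorem isMinRep.length_simple_mul_add {κ v : W} {i : B} (hκ : isMinRep cs I κ)
    (hsκ : isMinRep cs I (s i * κ)) (hv : v⁻¹ * κ ∈ parab cs I) :
    ℓ (s i * v) + ℓ κ = ℓ v + ℓ (s i * κ) := by
  have hz : κ⁻¹ * v ∈ parab cs I := by simpa using inv_mem hv
  have h₁ := hκ.length_mul hz
  have h₂ := hsκ.length_mul hz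
  simp only [mul_inv_cancel_left, mul_assoc] at h₁ h₂
  omega

theorem isMinRep.eq_simple_mul_or_length_eq {κ κ₂ : W} {i : B} (hκ : isMinRep cs I κ)
    (hκ₂ : isMinRep cs I κ₂) (hcoset : κ₂⁻¹ * (s i * κ) ∈ parab cs I) :
    κ₂ = s i * κ ∨ ℓ κ₂ = ℓ κ := by
  set p := κ₂⁻¹ * (s i * κ)
  have h₁ : ℓ (s i * κ) = ℓ κ₂ + ℓ p := by rw [← hκ₂.length_mul hcoset, mul_inv_cancel_left]
  have h₂ : ℓ (s i * κ₂) = ℓ κ + ℓ p := by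
    rw [← cs.length_inv p, ← hκ.length_mul (inv_mem hcoset)]
    simp [p, mul_assoc]
  have hp : ℓ p = 0 ∨ ℓ κ₂ = ℓ κ := by
    rcases cs.length_simple_mul κ i with h₃ | h₃ <;>
      rcases cs.length_simple_mul κ₂ i with h₄ | h₄ <;> omega
  refine hp.imp_left fun h ↦ ?_
  rw [cs.length_eq_zero_iff, inv_mul_eq_one] at h
  exact h

theorem simple_mul_inv_mul_mem_parab {κ κ₂ v : W} {i : B} (hcoset : κ₂⁻¹ * (s i * κ) ∈ parab cs I)
    (hv : v⁻¹ * κ₂ ∈ parab cs I) : (s i * v)⁻¹ * κ ∈ parab cs I := by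
  simpa [mul_assoc] using mul_mem hv hcoset

theorem inv_mul_simple_mul_mem_parab_comm {κ κ₂ : W} {i : B} (hcoset : κ₂⁻¹ * (s i * κ) ∈ parab cs I) :
    κ⁻¹ * (s i * κ₂) ∈ parab cs I := by
  simpa [mul_assoc] using inv_mem hcoset

theorem isMaxE_eq_of_isMaxE_simple_mul {w κ u u' : W} {i : B} (hκ : isMinRep cs I κ)
    (hsκ : isMinRep cs I (s i * κ)) (hasc : ℓ κ < ℓ (s i * κ)) (hsw : ℓ (s i * w) < ℓ w)
    (hu : isMaxE cs I w κ u) (hu' : isMaxE cs I (s i * w) κ u') : u = u' := by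
  have hsu : ℓ u < ℓ (s i * u) := by
    have := hκ.length_simple_mul_add hsκ hu.1.2
    omega
  have huu' := hu'.2 u ⟨hu.1.1.le_simple_mul hsu, hu.1.2⟩
  have hu'u := hu.2 u' ⟨hu'.1.1.trans (cBruhatLE_simple_mul_self hsw), hu'.1.2⟩
  exact huu'.antisymm hu'u

theorem eq_of_isMaxE_of_isDemazureProd {w κ κ₂ u u' d : W} {i : B}
    (hκ : isMinRep cs I κ) (hκ₂ : isMinRep cs I κ₂) (hcoset : κ₂⁻¹ * (s i * κ) ∈ parab cs I)
    (hcase : κ₂ = κ ∨ κ₂ = s i * κ ∧ ℓ κ₂ < ℓ κ) (hsw : ℓ (s i * w) < ℓ w)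
    (hu : isMaxE cs I w κ u) (hu' : isMaxE cs I (s i * w) κ₂ u')
    (hd : isDemazureProd cs (s i) u' d) : u = d := by
  obtain ⟨⟨huw, huκ⟩, humax⟩ := hu
  obtain ⟨⟨hu'w, hu'κ₂⟩, hu'max⟩ := hu'
  have hsu : ℓ (s i * u) < ℓ u := by
    rcases hcase with rfl | ⟨rfl, hlt⟩
    · by_contra! h
      have hle := (humax _ ⟨huw.simple_mul_le hsw, simple_mul_inv_mul_mem_parab hcoset huκ⟩).length_le
      have := cs.length_simple_mul_ne u i
      omega
    · have := hκ.length_simple_mul_add hκ₂ huκ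
      omega
  have hsuu' : cBruhatLE cs (s i * u) u' :=
    hu'max _ ⟨huw.simple_mul_le_simple_mul hsu, simple_mul_inv_mul_mem_parab (inv_mul_simple_mul_mem_parab_comm hcoset) huκ⟩
  have huD : u ∈ demazureSet cs (s i) u' := ⟨s i, s i * u, cBruhatLE_refl _, hsuu', by simp⟩
  rcases cs.length_simple_mul u' i with hasc | hdesc
  · obtain rfl := isDemazureProd_simple_of_lt (by omega) hd
    have hsu'w : cBruhatLE cs (s i * u') w := by
      simpa using (hu'w.simple_mul_simple_mul (i := i) (by simpa using hsw)).2
    exact (hd.2 u huD).antisymm (humax _ ⟨hsu'w, simple_mul_inv_mul_mem_parab hcoset hu'κ₂⟩)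
  · obtain rfl := isDemazureProd_simple_of_gt (by omega) hd
    rcases hcase with rfl | ⟨rfl, hlt⟩
    · exact (hd.2 u huD).antisymm (humax _ ⟨hu'w.trans (cBruhatLE_simple_mul_self hsw), hu'κ₂⟩)
    · have := hκ₂.length_simple_mul_add (i := i) (by simpa using hκ) hu'κ₂
      simp only [simple_mul_simple_cancel_left] at this
      omega

end DesingSMT

namespace DesingSMT

theorem statement8_general {B W : Type*} [Group W] {M : CoxeterMatrix B}
    (cs : CoxeterSystem M W)
    (I : Set B) (i : B) (w κ κ₂ u : W)
    (hκ : isMinRep cs I κ)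
    (hκ₂min : isMinRep cs I κ₂)
    (hκ₂ : κ₂⁻¹ * (cs.simple i * κ) ∈ parab cs I)
    (hsw : cs.length (cs.simple i * w) < cs.length w)
    (hu : isMaxE cs I w κ u) :
    ((cBruhatLE cs κ κ₂ ∧ κ ≠ κ₂) →
      ∀ u' : W, isMaxE cs I (cs.simple i * w) κ u' → u = u') ∧
    (cBruhatLE cs κ₂ κ →
      ∀ u' d : W, isMaxE cs I (cs.simple i * w) κ₂ u' →
        isDemazureProd cs (cs.simple i) u' d → u = d) := by
  have hcases := hκ.eq_simple_mul_or_length_eq hκ₂min hκ₂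
  refine ⟨fun ⟨hle, hne⟩ u' hu' ↦ ?_, fun hle u' d hu' hd ↦ ?_⟩
  · have hlt : cs.length κ < cs.length κ₂ :=
      hle.length_le.lt_of_ne fun h ↦ hne (hle.eq_of_length_le h.ge)
    obtain rfl := hcases.resolve_right hlt.ne'
    exact isMaxE_eq_of_isMaxE_simple_mul hκ hκ₂min hlt hsw hu hu'
  · refine eq_of_isMaxE_of_isDemazureProd hκ hκ₂min hκ₂ ?_ hsw hu hu' hd
    rcases hcases with rfl | hlen
    · exact Or.inr ⟨rfl, hle.length_le.lt_of_ne (cs.length_simple_mul_ne κ i)⟩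
    · exact Or.inl (hle.eq_of_length_le hlen.ge)

/-- Let `W` be a finite Weyl group, `W_P` a (standard) parabolic
subgroup, `κ ∈ W^P`, and `w ∈ W` with `E(w,κ) ≠ ∅` (witnessed by `u = max E(w,κ)`).
Let `s` be a simple reflection with `sw < w`, and let `sκ` denote the minimal coset
representative `κ₂` of `sκW_P`.  Then: (1) if `sκ > κ`, then
`max E(w,κ) = max E(sw,κ)`; (2) if `sκ ≤ κ`, then `max E(w,κ) = s * max E(sw,sκ)`,
where `*` is the Demazure product. -/
theorem statement8 {B W : Type*} [Group W] [Finite W] {M : CoxeterMatrix B}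
    (cs : CoxeterSystem M W) (hM : IsCrystallographic M)
    (I : Set B) (i : B) (w κ κ₂ u : W)
    (hκ : isMinRep cs I κ)
    (hκ₂min : isMinRep cs I κ₂)
    (hκ₂ : κ₂⁻¹ * (cs.simple i * κ) ∈ parab cs I)
    (hsw : cs.length (cs.simple i * w) < cs.length w)
    (hu : isMaxE cs I w κ u) :
    ((cBruhatLE cs κ κ₂ ∧ κ ≠ κ₂) →
      ∀ u' : W, isMaxE cs I (cs.simple i * w) κ u' → u = u') ∧
    (cBruhatLE cs κ₂ κ →
      ∀ u' d : W, isMaxE cs I (cs.simple i * w) κ₂ u' →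
        isDemazureProd cs (cs.simple i) u' d → u = d) :=
  statement8_general cs I i w κ κ₂ u hκ hκ₂min hκ₂ hsw hu

end DesingSMT
end
end

section
/- Let W = S_n, let P_d be the maximal parabolic subgroup associated to the d-th simple root, and let u_d be the minimal element of W with u_d ≡ w_0 mod W_{P_d}. Let w ≥ u_d and let κ ∈ W^{P_i} for an arbitrary i, with E(w,κ) ≠ ∅. Assume max E(w,κ) ≥ u_d. Then for every v ≥ u_d with E(v,κ) ≠ ∅, one has max E(v,κ) ≥ u_d. -/
/-!
Common framework: the symmetric group `S_n` (the Weyl group of `GL(n)`) with its simple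
reflections, length (inversion number), Bruhat order, longest element, and standard
parabolic subgroups.
-/

noncomputable section

namespace DesingSMT

variable (n : ℕ)

/-- The simple reflection `s_i = (i, i+1)` (`1`-based, `i ∈ [n-1]`) in `S_n`;
junk value `1` for `i` out of range. -/
def sTrans (i : ℕ) : Equiv.Perm (Fin n) :=
  if h : 1 ≤ i ∧ i < n then Equiv.swap ⟨i - 1, by omega⟩ ⟨i, h.2⟩ else 1

/-- The product `s_{l_1} ⋯ s_{l_t}` of the simple reflections of a list of letters. -/
def prodList (l : List ℕ) : Equiv.Perm (Fin n) := (l.map (sTrans n)).prod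

/-- The number of inversions of a permutation, i.e. its Coxeter length. -/
def invCount (w : Equiv.Perm (Fin n)) : ℕ :=
  (Finset.univ.filter (fun p : Fin n × Fin n => p.1 < p.2 ∧ w p.2 < w p.1)).card

/-- The Bruhat order on `S_n`: `u ≤ w` iff `w` is obtained from `u` by successively
multiplying by transpositions which increase the length. -/
def bruhatLE (u w : Equiv.Perm (Fin n)) : Prop :=
  Relation.ReflTransGen
    (fun x y => (∃ a b : Fin n, a ≠ b ∧ y = x * Equiv.swap a b) ∧ invCount n x < invCount n y)
    u w

/-- The longest element `w₀` of `S_n`. -/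
def w0 : Equiv.Perm (Fin n) := Fin.revPerm

/-- The maximal (standard) parabolic subgroup `W_{P_d}` of `S_n` generated by all the
simple reflections except `s_d`. -/
def parabS (d : ℕ) : Subgroup (Equiv.Perm (Fin n)) :=
  Subgroup.closure {x | ∃ j : ℕ, 1 ≤ j ∧ j < n ∧ j ≠ d ∧ x = sTrans n j}

end DesingSMT

/-!
Write `z • [0, p)` for the set of values of `z` on the first `p` positions and `rk z p q` for
the number of those values that are `≥ q`. The Bruhat order is dominance of these counts
(Ehresmann's criterion), and to check `rk z ≤ rk v` it suffices to look at the descents of `z`.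

The coset `w₀ W_{P_d}` consists of the permutations sending `[0, d)` onto the top `d` values;
`u_d`, having minimal length there, ascends everywhere except at `d`, so `u_d ≤ z` exactly when
`z` lies in that coset. Let `z` have minimal length in `κ W_{P_i} ∩ w₀ W_{P_d}`, which contains
`max E(w, κ)`. It ascends except at `i` and `d`; at `i` its counts are those of
`max E(v, κ) ≤ v`, at `d` those of `v`, so `z ≤ v`, hence `z ≤ max E(v, κ)`, and `u_d ≤ z`.
-/

namespace DesingSMT

open Finset Equiv Pointwise

variable {n : ℕ}

def inversions (z : Perm (Fin n)) : Finset (Fin n × Fin n) := {P | P.1 < P.2 ∧ z P.2 < z P.1}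

@[simp] lemma mem_inversions {z : Perm (Fin n)} {P : Fin n × Fin n} :
    P ∈ inversions z ↔ P.1 < P.2 ∧ z P.2 < z P.1 := by
  simp [inversions]

lemma invCount_eq_card_inversions (z : Perm (Fin n)) : invCount n z = #(inversions z) := rfl

lemma swap_apply_lt_swap_apply {z : Perm (Fin n)} {a b p q : Fin n} (hab : a < b) (h : z a < z b)
    (hpq : p < q) (hz : z q < z p) (hz' : z (swap a b p) < z (swap a b q)) :
    swap a b p < swap a b q := by
  simp only [swap_apply_def] at hz' ⊢
  split_ifs at hz' ⊢ <;> simp_all <;> omega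

theorem invCount_lt_invCount_mul_swap {z : Perm (Fin n)} {a b : Fin n} (hab : a < b)
    (h : z a < z b) : invCount n z < invCount n (z * swap a b) := by
  set s := swap a b
  set f : Fin n × Fin n → Fin n × Fin n := Prod.map s s
  have hf : f.Injective := s.injective.prodMap s.injective
  -- `f` injects the inversions lost into the inversions gained, and misses `(a, b)`.
  have hmaps : (inversions z \ inversions (z * s)).image f ⊆ inversions (z * s) \ inversions z := by
    intro P hP
    obtain ⟨⟨p, q⟩, hpq, rfl⟩ := mem_image.1 hP
    simp only [mem_inversions, mem_sdiff, Perm.mul_apply, not_and, not_lt] at hpq ⊢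
    have hlt := lt_of_le_of_ne (hpq.2 hpq.1.1) (fun e => by simp [s] at e; omega)
    simp only [f, Prod.map, s, swap_apply_self]
    exact ⟨⟨swap_apply_lt_swap_apply hab h hpq.1.1 hpq.1.2 hlt, hpq.1.2⟩, fun _ => hlt.le⟩
  have hnew : (a, b) ∈ inversions (z * s) \ inversions z := by
    simp [s, hab, h, not_lt.2 h.le]
  have hfresh : (a, b) ∉ (inversions z \ inversions (z * s)).image f := by
    intro hmem
    obtain ⟨⟨p, q⟩, hpq, he⟩ := mem_image.1 hmem
    simp only [f, Prod.map, Prod.mk.injEq, s] at he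
    obtain ⟨rfl, rfl⟩ : p = b ∧ q = a := by
      constructor
      · simpa using congrArg (swap a b) he.1
      · simpa using congrArg (swap a b) he.2
    simp only [mem_sdiff, mem_inversions] at hpq
    exact absurd hpq.1.1 (not_lt.2 hab.le)
  have hlt : #(inversions z \ inversions (z * s)) < #(inversions (z * s) \ inversions z) := by
    rw [← card_image_of_injective _ hf]
    exact card_lt_card ((ssubset_iff_of_subset hmaps).2 ⟨_, hnew, hfresh⟩)
  have h1 := card_sdiff_add_card_inter (inversions z) (inversions (z * s))
  have h2 := card_sdiff_add_card_inter (inversions (z * s)) (inversions z)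
  rw [inter_comm] at h2
  rw [invCount_eq_card_inversions, invCount_eq_card_inversions]
  omega

lemma lt_of_invCount_le_invCount_mul_swap {z : Perm (Fin n)} {a b : Fin n} (hab : a < b)
    (h : invCount n z ≤ invCount n (z * swap a b)) : z a < z b := by
  by_contra hba
  have hlt : (z * swap a b) a < (z * swap a b) b := by
    simp only [Perm.mul_apply, swap_apply_left, swap_apply_right]
    exact lt_of_le_of_ne (not_lt.1 hba) (z.injective.ne hab.ne')
  have := invCount_lt_invCount_mul_swap hab hlt
  rw [mul_assoc, swap_mul_self, mul_one] at this
  omega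

lemma invCount_le_sq (z : Perm (Fin n)) : invCount n z ≤ n * n :=
  (card_filter_le _ _).trans (by simp)

def rk (z : Perm (Fin n)) (p q : ℕ) : ℕ := #{c : Fin n | c.val < p ∧ q ≤ (z c).val}

lemma rk_split {z : Perm (Fin n)} {a : Fin n} {p : ℕ} (hap : a.val < p) (q : ℕ) :
    rk z p q = rk z a q + (if q ≤ (z a).val then 1 else 0)
      + #{c : Fin n | a < c ∧ c.val < p ∧ q ≤ (z c).val} := by
  have hmid : (if q ≤ (z a).val then 1 else 0)
      = ∑ c : Fin n, if c = a then (if q ≤ (z c).val then 1 else 0) else 0 := by simp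
  rw [rk, rk, card_filter, card_filter, card_filter, hmid, ← sum_add_distrib, ← sum_add_distrib]
  refine sum_congr rfl fun c _ => ?_
  rcases lt_trichotomy c a with h | rfl | h <;> split_ifs <;> omega

lemma rk_succ (z : Perm (Fin n)) (a : Fin n) (q : ℕ) :
    rk z (a.val + 1) q = rk z a q + if q ≤ (z a).val then 1 else 0 := by
  rw [rk_split (Nat.lt_succ_self _), add_eq_left, card_eq_zero, filter_eq_empty_iff]
  intro c _
  omega

lemma rk_congr {z v : Perm (Fin n)} {p : ℕ} (h : ∀ c : Fin n, c.val < p → z c = v c) (q : ℕ) :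
    rk z p q = rk v p q := by
  unfold rk
  congr 1
  exact filter_congr fun c _ => by constructor <;> rintro ⟨hc, hq⟩ <;> simp_all

lemma rk_mul_swap {z : Perm (Fin n)} {a b : Fin n} (hab : a < b) (h : z a < z b) (p q : ℕ) :
    rk (z * swap a b) p q = rk z p q
      + if a.val < p ∧ p ≤ b.val ∧ (z a).val < q ∧ q ≤ (z b).val then 1 else 0 := by
  rw [rk, rk, card_filter, card_filter, ← Equiv.sum_comp (swap a b)]
  simp only [Perm.mul_apply, swap_apply_self]
  rw [← sum_add_sum_compl {a, b},
    ← sum_add_sum_compl {a, b} (fun c => if c.val < p ∧ q ≤ (z c).val then 1 else 0),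
    sum_pair hab.ne, sum_pair hab.ne, swap_apply_left, swap_apply_right,
    sum_congr rfl fun c hc => by
      rw [swap_apply_of_ne_of_ne (by simp_all) (by simp_all)]]
  have : (z a).val < (z b).val := h
  split_ifs <;> omega

lemma rk_le_rk_mul_swap {z : Perm (Fin n)} {a b : Fin n} (hab : a < b) (h : z a < z b)
    (p q : ℕ) : rk z p q ≤ rk (z * swap a b) p q := by
  rw [rk_mul_swap hab h]
  exact Nat.le_add_right _ _

theorem rk_le_of_bruhatLE {z v : Perm (Fin n)} (h : bruhatLE n z v) (p q : ℕ) :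
    rk z p q ≤ rk v p q := by
  induction h with
  | refl => rfl
  | tail _ hstep ih =>
    obtain ⟨⟨a, b, hne, rfl⟩, hinv⟩ := hstep
    refine ih.trans ?_
    rcases hne.lt_or_gt with hab | hba
    · exact rk_le_rk_mul_swap hab (lt_of_invCount_le_invCount_mul_swap hab hinv.le) p q
    · rw [swap_comm] at hinv ⊢
      exact rk_le_rk_mul_swap hba (lt_of_invCount_le_invCount_mul_swap hba hinv.le) p q

lemma bruhatLE_mul_swap {z : Perm (Fin n)} {a b : Fin n} (hab : a < b) (h : z a < z b) :
    bruhatLE n z (z * swap a b) :=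
  .single ⟨⟨a, b, hab.ne, rfl⟩, invCount_lt_invCount_mul_swap hab h⟩

lemma rk_mul_swap_le {z v : Perm (Fin n)} {a b : Fin n}
    (hdom : ∀ p q, rk z p q ≤ rk v p q) (hagree : ∀ c, c < a → z c = v c)
    (hab : a < b) (hzab : z a < z b) (hzbv : z b ≤ v a)
    (hgap : ∀ c, a < c → c < b → z a < z c → v a < z c) (p q : ℕ) :
    rk (z * swap a b) p q ≤ rk v p q := by
  rw [rk_mul_swap hab hzab]
  split_ifs with hreg
  swap
  · exact hdom p q
  obtain ⟨hap, hpb, hzaq, hqzb⟩ := hreg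
  -- Between `a` and `b` the values of `z` avoid `(z a, v a]`, so there `z` has as many values
  -- `≥ q` as values `> v a`; dominance at `v a + 1` bounds these by those of `v`, and position
  -- `a` gives `v` one more.
  set r := (v a).val + 1
  have hlow : ∀ s, rk z a s = rk v a s := rk_congr fun c hc => hagree c hc
  have hWz : #{c : Fin n | a < c ∧ c.val < p ∧ q ≤ (z c).val}
      = #{c : Fin n | a < c ∧ c.val < p ∧ r ≤ (z c).val} := by
    refine congrArg card (filter_congr fun c _ => ?_)
    constructor
    · rintro ⟨hac, hcp, hqc⟩
      exact ⟨hac, hcp, hgap c hac (by omega) (by omega)⟩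
    · rintro ⟨hac, hcp, hrc⟩
      exact ⟨hac, hcp, by omega⟩
  have hWv : #{c : Fin n | a < c ∧ c.val < p ∧ r ≤ (v c).val}
      ≤ #{c : Fin n | a < c ∧ c.val < p ∧ q ≤ (v c).val} :=
    card_le_card fun c hc => by
      simp only [mem_filter, mem_univ, true_and] at hc ⊢
      exact ⟨hc.1, hc.2.1, by omega⟩
  have hz := rk_split (z := z) hap q
  have hv := rk_split (z := v) hap q
  have hzr := rk_split (z := z) hap r
  have hvr := rk_split (z := v) hap r
  have hdr := hdom p r
  rw [hlow] at hz hzr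
  split_ifs at hz hv hzr hvr <;> omega

lemma exists_swap_rk_le {z v : Perm (Fin n)} (hdom : ∀ p q, rk z p q ≤ rk v p q) (hne : z ≠ v) :
    ∃ a b : Fin n, a < b ∧ z a < z b ∧ ∀ p q, rk (z * swap a b) p q ≤ rk v p q := by
  -- `a` is the first position where `z` and `v` differ, `b` the first one after `a` where `z`
  -- takes a value in `(z a, v a]`.
  obtain ⟨a, ha, hamin⟩ := exists_min_image {c | z c ≠ v c} id
    (filter_nonempty_iff.2 (by simpa using fun h => hne (Equiv.ext h)))
  have hagree : ∀ c, c < a → z c = v c := fun c hca =>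
    by_contra fun hc => (hamin c (by simpa using hc)).not_gt hca
  replace ha : z a ≠ v a := by simpa using ha
  have hzav : z a < v a := by
    have h := hdom (a.val + 1) (z a)
    rw [rk_succ, rk_succ, rk_congr (fun c hc => hagree c hc)] at h
    split_ifs at h with h1 h2 <;> omega
  have hmem : z.symm (v a) ∈ ({c | a < c ∧ z a < z c ∧ z c ≤ v a} : Finset (Fin n)) := by
    simp only [mem_filter, mem_univ, apply_symm_apply, true_and, le_refl, and_true, hzav]
    rcases lt_trichotomy (z.symm (v a)) a with h | h | h
    · have := hagree _ h
      rw [apply_symm_apply] at this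
      exact absurd (v.injective this) h.ne'
    · have := congrArg z h
      rw [apply_symm_apply] at this
      exact absurd this.symm ha
    · exact h
  obtain ⟨b, hb, hbmin⟩ := exists_min_image _ id ⟨_, hmem⟩
  simp only [mem_filter, mem_univ, true_and] at hb
  refine ⟨a, b, hb.1, hb.2.1, rk_mul_swap_le hdom hagree hb.1 hb.2.1 hb.2.2 ?_⟩
  intro c hac hcb hzc
  by_contra hcv
  exact (hbmin c (by simp [hac, hzc, not_lt.1 hcv])).not_gt hcb

theorem bruhatLE_of_rk_le {z v : Perm (Fin n)} (h : ∀ p q, rk z p q ≤ rk v p q) :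
    bruhatLE n z v := by
  induction hm : n * n - invCount n z using Nat.strong_induction_on generalizing z with
  | _ m ih =>
    by_cases hzv : z = v
    · exact hzv ▸ .refl
    obtain ⟨a, b, hab, hzab, h'⟩ := exists_swap_rk_le h hzv
    have hlt := invCount_lt_invCount_mul_swap hab hzab
    have hle := invCount_le_sq (z * swap a b)
    exact (bruhatLE_mul_swap hab hzab).trans (ih _ (by omega) h' rfl)

def initSeg (n p : ℕ) : Finset (Fin n) := {c | c.val < p}

lemma rk_eq_card_smul_initSeg (z : Perm (Fin n)) (p q : ℕ) :
    rk z p q = #{x ∈ z • initSeg n p | q ≤ x.val} := by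
  rw [smul_finset_def, filter_image, card_image_of_injective _ (MulAction.injective z), initSeg,
    filter_filter]
  rfl

lemma rk_eq_of_smul_initSeg_eq {z v : Perm (Fin n)} {p : ℕ}
    (h : z • initSeg n p = v • initSeg n p) (q : ℕ) : rk z p q = rk v p q := by
  rw [rk_eq_card_smul_initSeg, rk_eq_card_smul_initSeg, h]

lemma rk_eq_of_le (z v : Perm (Fin n)) {p : ℕ} (hp : n ≤ p) (q : ℕ) : rk z p q = rk v p q := by
  have huniv : initSeg n p = univ := eq_univ_of_forall fun c => by
    simp only [initSeg, mem_filter, mem_univ, true_and]; omega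
  exact rk_eq_of_smul_initSeg_eq (by rw [huniv, smul_finset_univ, smul_finset_univ]) q

-- On an ascending run of `z`, stepping left over values `< q` or right over values `≥ q` can
-- only decrease `rk v · q - rk z · q`; the walk stops at a descent or at an end.
lemma rk_le_of_apply_pred_lt {z v : Perm (Fin n)}
    (h : ∀ a b : Fin n, a.val + 1 = b.val → z b < z a → ∀ q, rk z b q ≤ rk v b q) (q : ℕ) :
    ∀ m, (∀ c : Fin n, c.val + 1 = m → (z c).val < q) → rk z m q ≤ rk v m q := by
  intro m
  induction m with
  | zero => intro _; simp [rk]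
  | succ m ih =>
    intro hm
    by_cases hmn : m < n
    swap
    · exact (rk_eq_of_le z v (by omega) q).le
    have hprev : rk z m q ≤ rk v m q := by
      rcases m with _ | m
      · exact ih fun c hc => by omega
      by_cases hlt : (z ⟨m, by omega⟩).val < q
      · exact ih fun c hc => by rwa [show c = ⟨m, by omega⟩ from Fin.ext (Nat.succ.inj hc)]
      · exact h ⟨m, by omega⟩ ⟨m + 1, hmn⟩ rfl (by have := hm ⟨m + 1, hmn⟩ rfl; omega) q
    have hzm : (z ⟨m, hmn⟩).val < q := hm ⟨m, hmn⟩ rfl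
    have hz : rk z (m + 1) q = rk z m q + _ := rk_succ z ⟨m, hmn⟩ q
    have hv : rk v (m + 1) q = rk v m q + _ := rk_succ v ⟨m, hmn⟩ q
    split_ifs at hz hv <;> omega

lemma rk_le_of_le_apply {z v : Perm (Fin n)}
    (h : ∀ a b : Fin n, a.val + 1 = b.val → z b < z a → ∀ q, rk z b q ≤ rk v b q) (q : ℕ) :
    ∀ k m, m + k = n → (∀ c : Fin n, c.val = m → q ≤ (z c).val) → rk z m q ≤ rk v m q := by
  intro k
  induction k with
  | zero => intro m hm _; exact (rk_eq_of_le z v (by omega) q).le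
  | succ k ih =>
    intro m hm hge
    have hnext : rk z (m + 1) q ≤ rk v (m + 1) q := by
      by_cases hlast : m + 1 < n
      swap
      · exact (rk_eq_of_le z v (by omega) q).le
      by_cases hle : q ≤ (z ⟨m + 1, hlast⟩).val
      · exact ih (m + 1) (by omega) fun c hc => by rwa [show c = ⟨m + 1, hlast⟩ from Fin.ext hc]
      · exact h ⟨m, by omega⟩ ⟨m + 1, hlast⟩ rfl (by have := hge ⟨m, by omega⟩ rfl; omega) q
    have hzm : q ≤ (z ⟨m, by omega⟩).val := hge ⟨m, by omega⟩ rfl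
    have hz : rk z (m + 1) q = rk z m q + _ := rk_succ z ⟨m, by omega⟩ q
    have hv : rk v (m + 1) q = rk v m q + _ := rk_succ v ⟨m, by omega⟩ q
    split_ifs at hz hv <;> omega

theorem rk_le_of_rk_le_at_descents {z v : Perm (Fin n)}
    (h : ∀ a b : Fin n, a.val + 1 = b.val → z b < z a → ∀ q, rk z b q ≤ rk v b q) (p q : ℕ) :
    rk z p q ≤ rk v p q := by
  by_cases hpn : n ≤ p
  · exact (rk_eq_of_le z v hpn q).le
  rcases p with _ | p
  · exact rk_le_of_apply_pred_lt h q 0 fun c hc => by omega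
  by_cases hlt : (z ⟨p, by omega⟩).val < q
  · exact rk_le_of_apply_pred_lt h q (p + 1) fun c hc => by
      rwa [show c = ⟨p, by omega⟩ from Fin.ext (Nat.succ.inj hc)]
  by_cases hge : q ≤ (z ⟨p + 1, by omega⟩).val
  · exact rk_le_of_le_apply h q (n - (p + 1)) (p + 1) (by omega) fun c hc => by
      rwa [show c = ⟨p + 1, by omega⟩ from Fin.ext hc]
  · exact h ⟨p, by omega⟩ ⟨p + 1, by omega⟩ rfl (by omega) q

lemma swap_smul_initSeg {a b : Fin n} {k : ℕ} (h : a.val < k ↔ b.val < k) :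
    swap a b • initSeg n k = initSeg n k := by
  ext x
  rw [← inv_smul_mem_iff, swap_inv, Perm.smul_def]
  simp only [initSeg, mem_filter, mem_univ, true_and, swap_apply_def]
  split_ifs <;> simp_all

lemma swap_mem_parabS {a b : Fin n} {k : ℕ} (hab : a.val + 1 = b.val) (hbk : b.val ≠ k) :
    swap a b ∈ parabS n k := by
  refine Subgroup.subset_closure ⟨b, by omega, b.isLt, hbk, ?_⟩
  rw [sTrans, dif_pos ⟨by omega, b.isLt⟩]
  congr 1
  ext
  change a.val = b.val - 1
  omega

lemma parabS_le_stabilizer (k : ℕ) :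
    parabS n k ≤ MulAction.stabilizer (Perm (Fin n)) (initSeg n k) := by
  refine (Subgroup.closure_le _).2 ?_
  rintro _ ⟨j, hj1, hjn, hjk, rfl⟩
  rw [SetLike.mem_coe, MulAction.mem_stabilizer_iff, sTrans, dif_pos ⟨hj1, hjn⟩]
  exact swap_smul_initSeg (by simp; omega)

lemma smul_initSeg_eq_of_inv_mul_mem {z w : Perm (Fin n)} {k : ℕ} (h : z⁻¹ * w ∈ parabS n k) :
    w • initSeg n k = z • initSeg n k := by
  rw [show w = z * (z⁻¹ * w) by group, mul_smul,
    MulAction.mem_stabilizer_iff.1 (parabS_le_stabilizer k h)]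

lemma mul_swap_inv_mul_mem {z w : Perm (Fin n)} {a b : Fin n} {k : ℕ} (hab : a.val + 1 = b.val)
    (hbk : b.val ≠ k) (h : z⁻¹ * w ∈ parabS n k) : (z * swap a b)⁻¹ * w ∈ parabS n k := by
  rw [mul_inv_rev, swap_inv, mul_assoc]
  exact mul_mem (swap_mem_parabS hab hbk) h

lemma mem_w0_smul_initSeg {p : ℕ} {x : Fin n} : x ∈ w0 n • initSeg n p ↔ n - p ≤ x.val := by
  rw [← inv_smul_mem_iff]
  simp [initSeg, w0, Perm.smul_def]
  omega

lemma smul_initSeg_eq_w0_of_rk_le {u v : Perm (Fin n)} {p : ℕ}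
    (hu : u • initSeg n p = w0 n • initSeg n p) (h : ∀ q, rk u p q ≤ rk v p q) :
    v • initSeg n p = w0 n • initSeg n p := by
  set T := w0 n • initSeg n p
  have hcard : #(v • initSeg n p) = #T := by simp only [T, card_smul_finset]
  have htop := h (n - p)
  rw [rk_eq_card_smul_initSeg, rk_eq_card_smul_initSeg, hu,
    filter_true_of_mem fun x hx => mem_w0_smul_initSeg.1 hx, ← hcard] at htop
  have hsub : v • initSeg n p ⊆ T := by
    rw [← eq_of_subset_of_card_le (filter_subset _ _) htop]
    exact fun x hx => mem_w0_smul_initSeg.2 (mem_filter.1 hx).2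
  exact eq_of_subset_of_card_le hsub hcard.ge

theorem bruhatLE_of_rk_le_at_descents {z v : Perm (Fin n)}
    (h : ∀ a b : Fin n, a.val + 1 = b.val → z b < z a → ∀ q, rk z b q ≤ rk v b q) :
    bruhatLE n z v :=
  bruhatLE_of_rk_le (rk_le_of_rk_le_at_descents h)

theorem statement9_general (n d i : ℕ)
    (u : Equiv.Perm (Fin n))
    -- `u` is the minimal element congruent to `w₀` modulo `W_{P_d}`:
    (humem : u⁻¹ * w0 n ∈ parabS n d)
    (humin : ∀ z : Equiv.Perm (Fin n), z⁻¹ * w0 n ∈ parabS n d → invCount n u ≤ invCount n z)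
    (κ : Equiv.Perm (Fin n))
    (w x : Equiv.Perm (Fin n))
    -- `x = max E(w,κ)`:
    (hxE : bruhatLE n x w ∧ x⁻¹ * κ ∈ parabS n i)
    (hxu : bruhatLE n u x) :
    ∀ v : Equiv.Perm (Fin n), bruhatLE n u v →
      ∀ y : Equiv.Perm (Fin n),
        (bruhatLE n y v ∧ y⁻¹ * κ ∈ parabS n i) →
        (∀ z : Equiv.Perm (Fin n), bruhatLE n z v ∧ z⁻¹ * κ ∈ parabS n i → bruhatLE n z y) →
        bruhatLE n u y := by
  intro v huv y ⟨hyv, hyκ⟩ hymax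
  set T := w0 n • initSeg n d
  have hT : ∀ z, bruhatLE n u z → z • initSeg n d = T := fun z hz =>
    smul_initSeg_eq_w0_of_rk_le (smul_initSeg_eq_of_inv_mul_mem humem).symm
      (rk_le_of_bruhatLE hz d)
  have hu_asc : ∀ a b : Fin n, a.val + 1 = b.val → b.val ≠ d → u a < u b := fun a b hab hbd =>
    lt_of_invCount_le_invCount_mul_swap (by omega) (humin _ (mul_swap_inv_mul_mem hab hbd humem))
  classical
  obtain ⟨z, hzS, hzmin⟩ := exists_min_image
    {z : Perm (Fin n) | z⁻¹ * κ ∈ parabS n i ∧ z • initSeg n d = T} (invCount n)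
    ⟨x, by simpa using ⟨hxE.2, hT x hxu⟩⟩
  simp only [mem_filter, mem_univ, true_and, and_imp] at hzS hzmin
  have hz_asc : ∀ a b : Fin n, a.val + 1 = b.val → b.val ≠ i → b.val ≠ d → z a < z b :=
    fun a b hab hbi hbd => lt_of_invCount_le_invCount_mul_swap (by omega)
      (hzmin _ (mul_swap_inv_mul_mem hab hbi hzS.1)
        (by rw [mul_smul, swap_smul_initSeg (by omega)]; exact hzS.2))
  have hzv : bruhatLE n z v := bruhatLE_of_rk_le_at_descents fun a b hab hdesc q => by
    by_cases hbi : b.val = i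
    · rw [hbi, rk_eq_of_smul_initSeg_eq ((smul_initSeg_eq_of_inv_mul_mem hzS.1).symm.trans
        (smul_initSeg_eq_of_inv_mul_mem hyκ))]
      exact rk_le_of_bruhatLE hyv i q
    · have hbd : b.val = d := by_contra fun hbd => (hz_asc a b hab hbi hbd).not_gt hdesc
      rw [hbd, rk_eq_of_smul_initSeg_eq (hzS.2.trans (hT v huv).symm)]
  have huz : bruhatLE n u z := bruhatLE_of_rk_le_at_descents fun a b hab hdesc q => by
    have hbd : b.val = d := by_contra fun hbd => (hu_asc a b hab hbd).not_gt hdesc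
    rw [hbd, rk_eq_of_smul_initSeg_eq ((hT u .refl).trans hzS.2.symm)]
  exact huz.trans (hymax z ⟨hzv, hzS.1⟩)

/-- Let `W = S_n`, let `P_d` be the maximal parabolic subgroup
associated to the `d`-th simple root, and let `u_d` be the minimal element of `W` with
`u_d ≡ w₀ mod W_{P_d}`.  Let `w ≥ u_d` and `κ ∈ W^{P_i}` for an arbitrary `i`, with
`E(w,κ) ≠ ∅`.  Assume `max E(w,κ) ≥ u_d`.  Then for every `v ≥ u_d` with
`E(v,κ) ≠ ∅`, one has `max E(v,κ) ≥ u_d`.  (Here `E(w,κ) = {v ≤ w ∣ v ≡ κ mod W_{P_i}}`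
and `max` is with respect to the Bruhat order.) -/
theorem statement9 (n d i : ℕ) (hd1 : 1 ≤ d) (hdn : d < n) (hi1 : 1 ≤ i) (hin : i < n)
    (u : Equiv.Perm (Fin n))
    -- `u` is the minimal element congruent to `w₀` modulo `W_{P_d}`:
    (humem : u⁻¹ * w0 n ∈ parabS n d)
    (humin : ∀ z : Equiv.Perm (Fin n), z⁻¹ * w0 n ∈ parabS n d → invCount n u ≤ invCount n z)
    -- `κ ∈ W^{P_i}`:
    (κ : Equiv.Perm (Fin n)) (hκ : ∀ z ∈ parabS n i, invCount n κ ≤ invCount n (κ * z))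
    (w x : Equiv.Perm (Fin n)) (hw : bruhatLE n u w)
    -- `x = max E(w,κ)`:
    (hxE : bruhatLE n x w ∧ x⁻¹ * κ ∈ parabS n i)
    (hxmax : ∀ v : Equiv.Perm (Fin n),
      bruhatLE n v w ∧ v⁻¹ * κ ∈ parabS n i → bruhatLE n v x)
    (hxu : bruhatLE n u x) :
    ∀ v : Equiv.Perm (Fin n), bruhatLE n u v →
      ∀ y : Equiv.Perm (Fin n),
        (bruhatLE n y v ∧ y⁻¹ * κ ∈ parabS n i) →
        (∀ z : Equiv.Perm (Fin n), bruhatLE n z v ∧ z⁻¹ * κ ∈ parabS n i → bruhatLE n z y) →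
        bruhatLE n u y :=
  statement9_general n d i u humem humin κ w x hxE hxu

end DesingSMT
end
end
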